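/- arXiv:2107.00970 — 16 statements merged into one kernel-verified Lean document; each statement's English description precedes it below -/
import Mathlib

section
/- Let R be a commutative ring with identity, S a multiplicatively closed subset of R, and I an ideal of R disjoint from S. If I is an S-n-ideal of R, then there exists s ∈ S such that s·I ⊆ √0 (the nilradical of R). -/
/-- `I` is an `S`-`n`-ideal: `I` is disjoint from `S` and there is `s ∈ S` such that
whenever `a * b ∈ I` and `s * a` is not nilpotent, then `s * b ∈ I`. -/
def IsSnIdeal {R : Type*} [CommRing R] (S : Set R) (I : Ideal R) : Prop :=
  Disjoint S (I : Set R) ∧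
    ∃ s ∈ S, ∀ a b : R, a * b ∈ I → s * a ∉ nilradical R → s * b ∈ I

/-- `I` is an `n`-ideal: `I` is proper and `a * b ∈ I` with `a` not nilpotent implies `b ∈ I`. -/
def IsNIdeal {R : Type*} [CommRing R] (I : Ideal R) : Prop :=
  I ≠ ⊤ ∧ ∀ a b : R, a * b ∈ I → a ∉ nilradical R → b ∈ I

/-- `I` is an `S`-prime ideal. -/
def IsSPrime {R : Type*} [CommRing R] (S : Set R) (I : Ideal R) : Prop :=
  Disjoint S (I : Set R) ∧
    ∃ s ∈ S, ∀ a b : R, a * b ∈ I → s * a ∈ I ∨ s * b ∈ I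
theorem stmt_0 {R : Type*} [CommRing R] (S : Submonoid R) (I : Ideal R)
    (hdisj : Disjoint (S : Set R) (I : Set R))
    (h : IsSnIdeal (S : Set R) I) :
    ∃ s ∈ S, ∀ x ∈ I, s * x ∈ nilradical R := by
  obtain ⟨-, s, hs, hmain⟩ := h
  refine ⟨s, hs, fun x hx => ?_⟩
  by_contra hn
  have hxs : x * s ∈ I := I.mul_mem_right s hx
  have := hmain x s hxs hn
  exact Set.disjoint_left.mp hdisj (S.mul_mem hs hs) this
end

section
/- Let R be a commutative ring, S a multiplicatively closed subset of R with S ⊆ reg(R) (every element of S is a non-zero-divisor), and I an ideal disjoint from S. If I is an S-n-ideal of R, then I ⊆ √0. -/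
theorem stmt_1 {R : Type*} [CommRing R] (S : Submonoid R) (I : Ideal R)
    (hreg : (S : Set R) ⊆ {r : R | r ∈ nonZeroDivisors R})
    (hdisj : Disjoint (S : Set R) (I : Set R))
    (h : IsSnIdeal (S : Set R) I) :
    I ≤ nilradical R := by
  obtain ⟨-, s, hs, hmain⟩ := h
  intro a ha
  -- show s * a is nilpotent, else s = s * 1 ∈ I contradicting disjointness
  have hsa : s * a ∈ nilradical R := by
    by_contra hns
    have : s * 1 ∈ I := hmain a 1 (by simpa using ha) hns
    exact absurd (hdisj.ne_of_mem hs (by simpa using this)) (fun h => h rfl)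
  obtain ⟨n, hn⟩ := hsa
  refine ⟨n, ?_⟩
  have hsreg : s ^ n ∈ nonZeroDivisors R := pow_mem (hreg hs) n
  have : s ^ n * a ^ n = s ^ n * 0 := by
    rw [mul_zero, ← mul_pow]; exact hn
  exact (mul_cancel_left_mem_nonZeroDivisors hsreg).mp this
end

section
/- Let R be a commutative ring and S a multiplicatively closed subset of R with S ⊆ reg(R). Then the zero ideal of R is an S-n-ideal if and only if the zero ideal is an n-ideal. -/
section

variable {R : Type*} [CommRing R]

theorem mul_mem_nilradical_iff_of_mem_nonZeroDivisors {s a : R} (hs : s ∈ nonZeroDivisors R) :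
    s * a ∈ nilradical R ↔ a ∈ nilradical R := by
  simp only [mem_nilradical]
  refine ⟨fun ⟨n, hn⟩ => ⟨n, ?_⟩, (Commute.all s a).isNilpotent_mul_left⟩
  rwa [mul_pow, mul_left_mem_nonZeroDivisors_eq_zero_iff (pow_mem hs n)] at hn

theorem IsNIdeal.nontrivial {I : Ideal R} (hI : IsNIdeal I) : Nontrivial R :=
  nontrivial_of_ne 1 0 fun h => hI.1 ((Ideal.eq_top_iff_one I).2 (h ▸ I.zero_mem))

theorem disjoint_bot_of_subset_nonZeroDivisors [Nontrivial R] {S : Set R}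
    (hreg : S ⊆ nonZeroDivisors R) : Disjoint S ((⊥ : Ideal R) : Set R) :=
  Set.disjoint_right.2 fun _ hx hxS => zero_notMem_nonZeroDivisors (Ideal.mem_bot.1 hx ▸ hreg hxS)

theorem IsNIdeal.isSnIdeal {I : Ideal R} (hI : IsNIdeal I) {S : Submonoid R}
    (hdisj : Disjoint (S : Set R) I) : IsSnIdeal S I :=
  ⟨hdisj, 1, S.one_mem, fun a b hab ha => by
    simpa using hI.2 a b hab (by simpa using ha)⟩

theorem IsSnIdeal.isNIdeal_bot {S : Set R} (hreg : S ⊆ nonZeroDivisors R)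
    (h : IsSnIdeal S (⊥ : Ideal R)) : IsNIdeal (⊥ : Ideal R) := by
  obtain ⟨hdisj, s, hs, hsn⟩ := h
  have hs0 : s ∉ (⊥ : Ideal R) := Set.disjoint_left.1 hdisj hs
  refine ⟨fun hbot => hs0 (hbot ▸ Submodule.mem_top), fun a b hab ha => ?_⟩
  have hsb := hsn a b hab ((mul_mem_nilradical_iff_of_mem_nonZeroDivisors (hreg hs)).not.2 ha)
  rwa [Ideal.mem_bot, mul_left_mem_nonZeroDivisors_eq_zero_iff (hreg hs)] at hsb

end

theorem stmt_3_general {R : Type*} [CommRing R] (S : Submonoid R)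
    (hreg : (S : Set R) ⊆ {r : R | r ∈ nonZeroDivisors R}) :
    IsSnIdeal (S : Set R) (⊥ : Ideal R) ↔ IsNIdeal (⊥ : Ideal R) := by
  refine ⟨IsSnIdeal.isNIdeal_bot hreg, fun h => h.isSnIdeal ?_⟩
  have := h.nontrivial
  exact disjoint_bot_of_subset_nonZeroDivisors hreg

theorem stmt_3 {R : Type*} [CommRing R] [Nontrivial R] (S : Submonoid R)
    (hreg : (S : Set R) ⊆ {r : R | r ∈ nonZeroDivisors R}) :
    IsSnIdeal (S : Set R) (⊥ : Ideal R) ↔ IsNIdeal (⊥ : Ideal R) :=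
  stmt_3_general S hreg
end

section
/- Let R be a commutative ring, S a multiplicatively closed subset, and I an ideal disjoint from S. Then I is an S-n-ideal of R if and only if there exists s ∈ S such that for any two ideals J, K of R, JK ⊆ I implies sJ ⊆ √0 or sK ⊆ I. -/
theorem stmt_4 {R : Type*} [CommRing R] (S : Submonoid R) (I : Ideal R)
    (hdisj : Disjoint (S : Set R) (I : Set R)) :
    IsSnIdeal (S : Set R) I ↔
      ∃ s ∈ S, ∀ J K : Ideal R, J * K ≤ I →
        (∀ j ∈ J, s * j ∈ nilradical R) ∨ (∀ k ∈ K, s * k ∈ I) := by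
  constructor
  · rintro ⟨-, s, hs, h⟩
    refine ⟨s, hs, fun J K hJK => ?_⟩
    by_cases hJ : ∀ j ∈ J, s * j ∈ nilradical R
    · exact Or.inl hJ
    · push_neg at hJ
      obtain ⟨j, hjJ, hj⟩ := hJ
      exact Or.inr fun k hk => h j k (hJK (Ideal.mul_mem_mul hjJ hk)) hj
  · rintro ⟨s, hs, h⟩
    refine ⟨hdisj, s, hs, fun a b hab hna => ?_⟩
    have := h (Ideal.span {a}) (Ideal.span {b}) ?_
    · rcases this with hJ | hK
      · exact absurd (hJ a (Ideal.subset_span rfl)) hna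
      · exact hK b (Ideal.subset_span rfl)
    · rw [Ideal.span_singleton_mul_span_singleton]
      exact (Ideal.span_singleton_le_iff_mem I).mpr hab
end

section
/- Let R be a commutative ring, S ⊆ reg(R) a multiplicatively closed subset, and I an S-prime ideal of R. Then I is an S-n-ideal of R if and only if (I : s) = √0 for some s ∈ S. -/
/-!
If `s` witnesses the `S`-`n`-property, then `s * r ∈ I` forces `s * r` to be nilpotent (otherwise
`s * s ∈ I`), and regularity of `s` cancels it, so `(I : s) ⊆ √0`. For the reverse inclusion,
iterating the `S`-prime property with witness `t` turns `r ^ (n + 1) = 0 ∈ I` into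
`t ^ n * r ∈ I`, and then `s * r ∈ I` because `s * t ^ n ∈ S` is not nilpotent.
Conversely, if `(I : s) = √0`, then `s * t` witnesses the `S`-`n`-property: from `a * b ∈ I`
either `t * b ∈ I`, or `t * a ∈ I` and then `s * t * a` is nilpotent.
-/

section

open nonZeroDivisors

variable {R : Type*} [CommRing R]

lemma notMem_nilradical_of_disjoint {S : Submonoid R} {I : Ideal R}
    (hdisj : Disjoint (S : Set R) I) {x : R} (hx : x ∈ S) : x ∉ nilradical R := by
  rintro ⟨n, hn⟩
  exact Set.disjoint_left.mp hdisj (pow_mem hx n) (hn ▸ I.zero_mem)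

lemma pow_mul_mem_of_pow_succ_mem {I : Ideal R} {t : R}
    (ht : ∀ a b : R, a * b ∈ I → t * a ∈ I ∨ t * b ∈ I) :
    ∀ (n : ℕ) {r : R}, r ^ (n + 1) ∈ I → t ^ n * r ∈ I
  | 0, r, hr => by simpa using hr
  | n + 1, r, hr => by
    rw [pow_succ'] at hr
    rcases ht r (r ^ (n + 1)) hr with htr | htr
    · rw [pow_succ, mul_assoc]
      exact I.mul_mem_left _ htr
    · have htr_pow : (t * r) ^ (n + 1) ∈ I := by
        rw [mul_pow, pow_succ, mul_assoc]
        exact I.mul_mem_left _ htr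
      simpa only [pow_succ, mul_assoc] using pow_mul_mem_of_pow_succ_mem ht n htr_pow

theorem IsSnIdeal.exists_colon_eq_nilradical {S : Submonoid R} {I : Ideal R}
    (hn : IsSnIdeal S I) (hreg : S ≤ R⁰) (hprime : IsSPrime S I) :
    ∃ s ∈ S, I.colon (Ideal.span {s}) = nilradical R := by
  obtain ⟨hdisj, s, hsS, hs⟩ := hn
  obtain ⟨-, t, htS, ht⟩ := hprime
  refine ⟨s, hsS, le_antisymm (fun r hr ↦ ?_) (fun r ⟨n, hrn⟩ ↦ ?_)⟩
  · rw [Ideal.mem_colon_span_singleton] at hr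
    have hsr : s * r ∈ nilradical R := by
      by_contra hsr
      exact Set.disjoint_left.mp hdisj (S.mul_mem hsS hsS) (hs r s hr hsr)
    exact ((Commute.all s r).isNilpotent_mul_left_iff (hreg hsS).1).mp hsr
  · have htr : t ^ n * r ∈ I :=
      pow_mul_mem_of_pow_succ_mem ht n (by rw [pow_succ, hrn, zero_mul]; exact I.zero_mem)
    rw [Ideal.mem_colon_span_singleton, mul_comm]
    exact hs _ _ htr (notMem_nilradical_of_disjoint hdisj (S.mul_mem hsS (pow_mem htS n)))

theorem IsSPrime.isSnIdeal_of_colon_eq_nilradical {S : Submonoid R} {I : Ideal R}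
    (hprime : IsSPrime S I) {s : R} (hsS : s ∈ S)
    (hs : I.colon (Ideal.span {s}) = nilradical R) : IsSnIdeal S I := by
  obtain ⟨hdisj, t, htS, ht⟩ := hprime
  refine ⟨hdisj, s * t, S.mul_mem hsS htS, fun a b hab hsta ↦ ?_⟩
  rcases ht a b hab with hta | htb
  · have hta_nil : t * a ∈ nilradical R :=
      hs ▸ Ideal.mem_colon_span_singleton.mpr (I.mul_mem_right s hta)
    exact absurd (mul_assoc s t a ▸ (nilradical R).mul_mem_left s hta_nil) hsta
  · simpa only [mul_assoc] using I.mul_mem_left s htb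

end

theorem stmt_7 {R : Type*} [CommRing R] (S : Submonoid R) (I : Ideal R)
    (hreg : (S : Set R) ⊆ {r : R | r ∈ nonZeroDivisors R})
    (hprime : IsSPrime (S : Set R) I) :
    IsSnIdeal (S : Set R) I ↔ ∃ s ∈ S, I.colon (Ideal.span {s}) = nilradical R :=
  ⟨fun hn ↦ hn.exists_colon_eq_nilradical hreg hprime,
    fun ⟨_, hsS, hs⟩ ↦ hprime.isSnIdeal_of_colon_eq_nilradical hsS hs⟩
end

section
/- Let R be a reduced commutative ring and S ⊆ reg(R) a multiplicatively closed subset. Then R is an integral domain if and only if there exists an ideal of R that is simultaneously an S-prime ideal and an S-n-ideal. -/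
/-!
Taking `b = 1` in the `S`-`n`-ideal condition, every `x ∈ I` has `t * x` nilpotent, since
otherwise `t ∈ I` would meet `S`; in a reduced ring this means `t * x = 0`, so `x = 0` as `t` is
regular. Hence `I = ⊥`, and `⊥` being `S`-prime means that `a * b = 0` forces `s * a = 0` or
`s * b = 0`, i.e. `a = 0` or `b = 0`. Conversely, in a domain `⊥` is both, with witness `1`.
-/

section

variable {R : Type*} [CommRing R]

theorem disjoint_coe_bot_iff {S : Set R} : Disjoint S ((⊥ : Ideal R) : Set R) ↔ (0 : R) ∉ S := by
  simp [Set.disjoint_singleton_right]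

theorem IsSnIdeal.eq_bot [IsReduced R] {S : Set R} (hS : S ⊆ nonZeroDivisors R) {I : Ideal R}
    (hI : IsSnIdeal S I) : I = ⊥ := by
  obtain ⟨hdisj, t, htS, ht⟩ := hI
  refine (Submodule.eq_bot_iff I).mpr fun x hx => ?_
  by_cases htx : t * x ∈ nilradical R
  · rw [nilradical_eq_zero, Ideal.zero_eq_bot, Ideal.mem_bot] at htx
    exact (mem_nonZeroDivisors_iff.mp (hS htS)).2 x (by rwa [mul_comm])
  · have htI : t ∈ I := by simpa using ht x 1 (by simpa using hx) htx
    exact absurd htI (Set.disjoint_left.mp hdisj htS)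

theorem isDomain_of_isSPrime_bot {S : Set R} (hS : S ⊆ nonZeroDivisors R)
    (h : IsSPrime S (⊥ : Ideal R)) : IsDomain R := by
  obtain ⟨hdisj, s, hsS, hs⟩ := h
  have : Nontrivial R := ⟨⟨s, 0, fun h => disjoint_coe_bot_iff.mp hdisj (h ▸ hsS)⟩⟩
  have hcancel : ∀ a : R, s * a = 0 → a = 0 := fun a hsa =>
    (mem_nonZeroDivisors_iff.mp (hS hsS)).2 a (by rwa [mul_comm])
  have : NoZeroDivisors R := ⟨fun {a b} hab => by
    simpa only [Ideal.mem_bot] using (hs a b (Ideal.mem_bot.mpr hab)).imp (hcancel a) (hcancel b)⟩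
  exact NoZeroDivisors.to_isDomain R

section IsDomain

variable [IsDomain R] {S : Submonoid R}

theorem isSPrime_bot (h0 : (0 : R) ∉ S) : IsSPrime (S : Set R) ⊥ := by
  refine ⟨disjoint_coe_bot_iff.mpr h0, 1, S.one_mem, fun a b hab => ?_⟩
  simpa using hab

theorem isSnIdeal_bot (h0 : (0 : R) ∉ S) : IsSnIdeal (S : Set R) ⊥ := by
  refine ⟨disjoint_coe_bot_iff.mpr h0, 1, S.one_mem, fun a b hab ha => ?_⟩
  simp_all [nilradical_eq_zero]

end IsDomain

end

theorem stmt_9 {R : Type*} [CommRing R] [IsReduced R] (S : Submonoid R)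
    (hreg : (S : Set R) ⊆ {r : R | r ∈ nonZeroDivisors R}) :
    IsDomain R ↔ ∃ I : Ideal R, IsSPrime (S : Set R) I ∧ IsSnIdeal (S : Set R) I := by
  constructor
  · intro _
    have h0 : (0 : R) ∉ S := fun h => zero_notMem_nonZeroDivisors (hreg h)
    exact ⟨⊥, isSPrime_bot h0, isSnIdeal_bot h0⟩
  · rintro ⟨I, hprime, hn⟩
    obtain rfl := hn.eq_bot hreg
    exact isDomain_of_isSPrime_bot hreg hprime
end

section
/- Let n = p₁^{r₁} p₂^{r₂} be a product of two distinct prime powers (r₁, r₂ ≥ 1) and let S_{p₁} = {1, p̄₁, p̄₁², ...} ⊆ ℤ_n. Then every ideal of ℤ_n disjoint from S_{p₁} is an S_{p₁}-n-ideal of ℤ_n. -/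
theorem stmt_10 (p₁ p₂ : ℕ) (hp₁ : p₁.Prime) (hp₂ : p₂.Prime) (hne : p₁ ≠ p₂)
    (r₁ r₂ : ℕ) (hr₁ : 1 ≤ r₁) (hr₂ : 1 ≤ r₂) :
    ∀ I : Ideal (ZMod (p₁ ^ r₁ * p₂ ^ r₂)),
      Disjoint ((Submonoid.powers ((p₁ : ZMod (p₁ ^ r₁ * p₂ ^ r₂)))) : Set (ZMod (p₁ ^ r₁ * p₂ ^ r₂)))
        (I : Set (ZMod (p₁ ^ r₁ * p₂ ^ r₂))) →
      IsSnIdeal ((Submonoid.powers ((p₁ : ZMod (p₁ ^ r₁ * p₂ ^ r₂)))) : Set (ZMod (p₁ ^ r₁ * p₂ ^ r₂))) I := by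
  intro I hdisj
  set N := p₁ ^ r₁ * p₂ ^ r₂ with hN
  haveI : NeZero N := ⟨Nat.mul_ne_zero (pow_ne_zero _ hp₁.pos.ne') (pow_ne_zero _ hp₂.pos.ne')⟩
  refine ⟨hdisj, (p₁ : ZMod N) ^ r₁, ⟨r₁, rfl⟩, ?_⟩
  intro a b hab hnil
  have hval : ((ZMod.val a : ℕ) : ZMod N) = a := by
    rw [ZMod.natCast_val, ZMod.cast_id]
  -- Step 1: p₂ does not divide a.val
  have hp2 : ¬ (p₂ ∣ ZMod.val a) := by
    intro hdvd
    apply hnil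
    have ha : a = (p₂ : ZMod N) * ((ZMod.val a / p₂ : ℕ) : ZMod N) := by
      conv_lhs => rw [← hval]
      rw [← Nat.cast_mul, Nat.mul_div_cancel' hdvd]
    have hnilp : ((p₁ : ZMod N) ^ r₁ * p₂) ∈ nilradical (ZMod N) := by
      refine mem_nilradical.2 ⟨r₂, ?_⟩
      obtain ⟨k, rfl⟩ : ∃ k, r₂ = k + 1 := ⟨r₂ - 1, by omega⟩
      have h1 : r₁ * (k + 1) = r₁ + r₁ * (k + 1 - 1) := by
        rw [Nat.add_sub_cancel, Nat.mul_succ, Nat.add_comm]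
      have hz : ((N : ℕ) : ZMod N) = 0 := ZMod.natCast_self N
      calc ((p₁ : ZMod N) ^ r₁ * p₂) ^ (k + 1)
          = (p₁ : ZMod N) ^ (r₁ * (k + 1)) * (p₂ : ZMod N) ^ (k + 1) := by
            rw [mul_pow, ← pow_mul]
        _ = ((p₁ ^ r₁ * p₂ ^ (k + 1) : ℕ) : ZMod N) * (p₁ : ZMod N) ^ (r₁ * (k + 1 - 1)) := by
            rw [h1]; push_cast; ring
        _ = 0 := by rw [← hN, hz, zero_mul]
    have heq : (p₁ : ZMod N) ^ r₁ * a
        = ((p₁ : ZMod N) ^ r₁ * p₂) * ((ZMod.val a / p₂ : ℕ) : ZMod N) := by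
      conv_lhs => rw [ha]
      ring
    rw [heq]
    exact Ideal.mul_mem_right _ _ hnilp
  -- Step 2: gcd(a.val, N) divides p₁ ^ r₁
  have hcop : Nat.Coprime (p₂ ^ r₂) (ZMod.val a) :=
    Nat.Coprime.pow_left _ ((Nat.Prime.coprime_iff_not_dvd hp₂).2 hp2)
  have hgdvd : Nat.gcd (ZMod.val a) N ∣ p₁ ^ r₁ := by
    rw [hN, Nat.Coprime.gcd_mul_right_cancel_right _ hcop]
    exact Nat.gcd_dvd_right _ _
  -- Step 3: a divides p₁ ^ r₁ in ZMod N
  have hag : a ∣ ((Nat.gcd (ZMod.val a) N : ℕ) : ZMod N) := by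
    refine ⟨((Nat.gcdA (ZMod.val a) N : ℤ) : ZMod N), ?_⟩
    have bez := Nat.gcd_eq_gcd_ab (ZMod.val a) N
    have : ((Nat.gcd (ZMod.val a) N : ℤ) : ZMod N)
        = ((ZMod.val a : ℤ) * Nat.gcdA (ZMod.val a) N
           + (N : ℤ) * Nat.gcdB (ZMod.val a) N : ℤ) := by
      exact_mod_cast congrArg (fun z : ℤ => ((z : ZMod N))) bez
    push_cast at this
    rw [ZMod.natCast_self, zero_mul, add_zero, hval] at this
    exact_mod_cast this
  have has : a ∣ (p₁ : ZMod N) ^ r₁ := by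
    refine hag.trans ?_
    obtain ⟨k, hk⟩ := hgdvd
    exact ⟨(k : ℕ), by exact_mod_cast congrArg (fun m : ℕ => ((m : ZMod N))) hk⟩
  obtain ⟨c, hc⟩ := has
  have hfin : (p₁ : ZMod N) ^ r₁ * b = c * (a * b) := by rw [hc]; ring
  rw [hfin]
  exact Ideal.mul_mem_left _ _ hab
end

section
/- Let n = p₁^{r₁} p₂^{r₂} ⋯ p_k^{r_k} with k ≥ 3 distinct primes p₁,...,p_k and r_i ≥ 1, and let S_{p₁} = {1, p̄₁, p̄₁², ...} ⊆ ℤ_n. Then ℤ_n has no S_{p₁}-n-ideals. -/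
theorem stmt_11 (k : ℕ) (hk : 3 ≤ k) (p : Fin k → ℕ) (hp : ∀ i, (p i).Prime)
    (hinj : Function.Injective p) (r : Fin k → ℕ) (hr : ∀ i, 1 ≤ r i)
    (i₀ : Fin k) :
    ∀ I : Ideal (ZMod (∏ i, p i ^ r i)),
      ¬ IsSnIdeal
        ((Submonoid.powers ((p i₀ : ZMod (∏ i, p i ^ r i)))) : Set (ZMod (∏ i, p i ^ r i))) I := by
  set N := ∏ i, p i ^ r i with hN
  intro I hI
  obtain ⟨hdisj, s, hsS, hS⟩ := hI
  obtain ⟨t, hts⟩ := id hsS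
  have hNpos : 0 < N := Finset.prod_pos fun i _ => pow_pos (hp i).pos _
  haveI : NeZero N := ⟨hNpos.ne'⟩
  have h2 : 1 < (Finset.univ.erase i₀).card := by
    rw [Finset.card_erase_of_mem (Finset.mem_univ _), Finset.card_univ, Fintype.card_fin]
    omega
  obtain ⟨j, hj, l, hl, hjl⟩ := Finset.one_lt_card.mp h2
  have hj' := (Finset.mem_erase.mp hj).1
  have hl' := (Finset.mem_erase.mp hl).1
  -- key step
  have key : ∀ m : Fin k, m ≠ i₀ → s * ((p m ^ r m : ℕ) : ZMod N) ∈ I := by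
    intro m hm
    set A : ℕ := ∏ i ∈ Finset.univ.erase m, p i ^ r i with hA
    have hab : ((A : ℕ) : ZMod N) * ((p m ^ r m : ℕ) : ZMod N) ∈ I := by
      have : (A * (p m ^ r m) : ℕ) = N := Finset.prod_erase_mul _ _ (Finset.mem_univ m)
      have h0 : ((A : ℕ) : ZMod N) * ((p m ^ r m : ℕ) : ZMod N) = 0 := by
        rw [← Nat.cast_mul, this]; exact ZMod.natCast_self N
      rw [h0]; exact I.zero_mem
    refine hS _ _ hab ?_
    intro hnil
    rw [mem_nilradical] at hnil
    obtain ⟨e, he⟩ := hnil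
    have hsa : s * ((A : ℕ) : ZMod N) = ((p i₀ ^ t * A : ℕ) : ZMod N) := by
      rw [← hts]; push_cast; ring
    rw [hsa, ← Nat.cast_pow, ZMod.natCast_eq_zero_iff] at he
    have hdvd : p m ∣ (p i₀ ^ t * A) ^ e := by
      refine dvd_trans ?_ he
      refine dvd_trans ?_ (Finset.dvd_prod_of_mem _ (Finset.mem_univ m))
      exact dvd_pow_self _ (Nat.one_le_iff_ne_zero.mp (hr m))
    have := (hp m).prime.dvd_of_dvd_pow hdvd
    rcases (hp m).prime.dvd_mul.mp this with h | h
    · have := (hp m).prime.dvd_of_dvd_pow h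
      have := (Nat.prime_dvd_prime_iff_eq (hp m) (hp i₀)).mp this
      exact hm (hinj this)
    · obtain ⟨i, hi, hdi⟩ := ((hp m).prime.dvd_finset_prod_iff _).mp h
      have := (hp m).prime.dvd_of_dvd_pow hdi
      have := (Nat.prime_dvd_prime_iff_eq (hp m) (hp i)).mp this
      exact (Finset.mem_erase.mp hi).1 (hinj this).symm
  have hj2 := key j hj'
  have hl2 := key l hl'
  -- Bezout
  have hcop : Nat.Coprime (p j ^ r j) (p l ^ r l) :=
    Nat.Coprime.pow _ _ ((Nat.coprime_primes (hp j) (hp l)).mpr fun h => hjl (hinj h))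
  have hbez := Nat.gcd_eq_gcd_ab (p j ^ r j) (p l ^ r l)
  rw [Nat.Coprime] at hcop
  rw [hcop] at hbez
  have h1 : (1 : ZMod N) = ((p j ^ r j : ℕ) : ZMod N) * ((Nat.gcdA (p j ^ r j) (p l ^ r l) : ℤ) : ZMod N)
      + ((p l ^ r l : ℕ) : ZMod N) * ((Nat.gcdB (p j ^ r j) (p l ^ r l) : ℤ) : ZMod N) := by
    have := congrArg (fun z : ℤ => ((z : ZMod N))) hbez
    push_cast at this ⊢
    simpa using this
  have hsI : s ∈ I := by
    have heq : s = ((Nat.gcdA (p j ^ r j) (p l ^ r l) : ℤ) : ZMod N) * (s * ((p j ^ r j : ℕ) : ZMod N))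
        + ((Nat.gcdB (p j ^ r j) (p l ^ r l) : ℤ) : ZMod N) * (s * ((p l ^ r l : ℕ) : ZMod N)) := by
      calc s = s * 1 := (mul_one s).symm
        _ = _ := by rw [h1]; ring
    rw [heq]
    exact I.add_mem (I.mul_mem_left _ hj2) (I.mul_mem_left _ hl2)
  exact Set.disjoint_left.mp hdisj hsS hsI
end

section
/- Let R be a commutative ring and S ⊆ reg(R) a multiplicatively closed subset. If I is a maximal S-n-ideal of R (no S-n-ideal properly contains I), then I is an S-prime ideal of R. -/
theorem stmt_12 {R : Type*} [CommRing R] (S : Submonoid R) (I : Ideal R)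
    (hreg : (S : Set R) ⊆ {r : R | r ∈ nonZeroDivisors R})
    (hI : IsSnIdeal (S : Set R) I)
    (hmax : ∀ J : Ideal R, IsSnIdeal (S : Set R) J → I ≤ J → I = J) :
    IsSPrime (S : Set R) I := by
  obtain ⟨hdisj, s, hs, hprop⟩ := hI
  -- the ring is nontrivial
  have hnontriv : Nontrivial R := by
    rcases subsingleton_or_nontrivial R with h | h
    · exfalso
      have h1 : (1 : R) ∈ I := by
        have : (1 : R) = 0 := Subsingleton.elim _ _
        rw [this]; exact I.zero_mem
      exact Set.disjoint_left.mp hdisj S.one_mem h1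
    · exact h
  -- s * t is not nilpotent for t ∈ S
  have hst : ∀ t ∈ (S : Set R), s * t ∉ nilradical R := by
    intro t ht hnil
    obtain ⟨k, hk⟩ := hnil
    have hmem : s * t ∈ nonZeroDivisors R := mul_mem (hreg hs) (hreg ht)
    have : (0 : R) ∈ nonZeroDivisors R := hk ▸ pow_mem hmem k
    exact zero_notMem_nonZeroDivisors this
  refine ⟨hdisj, s, hs, fun a b hab => ?_⟩
  by_cases hsb : s * b ∈ I
  · exact Or.inr hsb
  · left
    set J := I.colon (Ideal.span {b}) with hJdef
    have hIJ : I ≤ J := fun x hx => Ideal.mem_colon_span_singleton.mpr (I.mul_mem_right b hx)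
    have hJ : IsSnIdeal (S : Set R) J := by
      constructor
      · rw [Set.disjoint_left]
        intro t ht htJ
        have htb : t * b ∈ I := Ideal.mem_colon_span_singleton.mp htJ
        exact hsb (hprop t b htb (hst t ht))
      · refine ⟨s, hs, fun x y hxy hsx => ?_⟩
        rw [Ideal.mem_colon_span_singleton] at hxy ⊢
        rw [mul_assoc] at hxy ⊢
        exact hprop x (y * b) hxy hsx
    have heq : I = J := hmax J hJ hIJ
    have haJ : a ∈ J := Ideal.mem_colon_span_singleton.mpr hab
    rw [← heq] at haJ
    exact I.mul_mem_left s haJ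
end

section
/- Let R be a commutative ring, S a multiplicatively closed subset, I an S-n-ideal of R, and J an ideal of R with J ∩ S ≠ ∅. Then the product IJ and the intersection I ∩ J are S-n-ideals of R. -/
/- If `s` witnesses that `I` is an `S`-`n`-ideal, then `s * t` witnesses it for `K`. -/
theorem IsSnIdeal.of_le_of_mul_mem {R : Type*} [CommRing R] {S : Submonoid R} {I K : Ideal R}
    (hI : IsSnIdeal (S : Set R) I) (hKI : K ≤ I) {t : R} (ht : t ∈ S)
    (htK : ∀ x ∈ I, t * x ∈ K) : IsSnIdeal (S : Set R) K := by
  obtain ⟨hdisj, s, hs, hsI⟩ := hI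
  refine ⟨hdisj.mono_right hKI, s * t, S.mul_mem hs ht, fun a b hab hsta => ?_⟩
  have hsa : s * a ∉ nilradical R := fun h =>
    hsta (mul_right_comm s t a ▸ (nilradical R).mul_mem_right t h)
  simpa only [mul_comm t, mul_right_comm] using htK _ (hsI a b (hKI hab) hsa)

theorem stmt_13 {R : Type*} [CommRing R] (S : Submonoid R) (I J : Ideal R)
    (hI : IsSnIdeal (S : Set R) I) (hJ : ((J : Set R) ∩ (S : Set R)).Nonempty) :
    IsSnIdeal (S : Set R) (I * J) ∧ IsSnIdeal (S : Set R) (I ⊓ J) := by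
  obtain ⟨t, htJ, htS⟩ := hJ
  have htIJ : ∀ x ∈ I, t * x ∈ I * J := fun x hx => mul_comm x t ▸ Ideal.mul_mem_mul hx htJ
  exact ⟨hI.of_le_of_mul_mem Ideal.mul_le_left htS htIJ,
    hI.of_le_of_mul_mem inf_le_left htS fun x hx => Ideal.mul_le_inf (htIJ x hx)⟩
end

section
/- Let S and T be multiplicatively closed subsets of a commutative ring R with S ⊆ T, such that for every t ∈ T there exists t' ∈ T with tt' ∈ S. If I is a T-n-ideal of R, then I is an S-n-ideal of R. -/
theorem stmt_14 {R : Type*} [CommRing R] (S T : Submonoid R) (I : Ideal R)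
    (hST : (S : Set R) ⊆ (T : Set R))
    (h : ∀ t ∈ T, ∃ t' ∈ T, t * t' ∈ S)
    (hI : IsSnIdeal (T : Set R) I) :
    IsSnIdeal (S : Set R) I := by
  obtain ⟨hdisj, t, htT, ht⟩ := hI
  obtain ⟨t', ht'T, htt'⟩ := h t htT
  refine ⟨hdisj.mono_left hST, t * t', htt', fun a b hab hna => ?_⟩
  have h1 : t * a ∉ nilradical R := fun hn => hna (by
    have : t * t' * a = t' * (t * a) := by ring
    rw [this]
    exact (nilradical R).mul_mem_left t' hn)
  have h2 := ht a b hab h1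
  have : t * t' * b = t' * (t * b) := by ring
  rw [this]
  exact I.mul_mem_left t' h2
end

section
/- Let R be a commutative ring, S a multiplicatively closed subset, and I an ideal disjoint from the saturation S* = {x ∈ R : xy ∈ S for some y ∈ R}. Then I is an S-n-ideal of R if and only if I is an S*-n-ideal of R. -/
theorem stmt_15 {R : Type*} [CommRing R] (S : Submonoid R) (I : Ideal R)
    (hdisj : Disjoint {x : R | ∃ y : R, x * y ∈ S} (I : Set R)) :
    IsSnIdeal (S : Set R) I ↔ IsSnIdeal {x : R | ∃ y : R, x * y ∈ S} I := by
  constructor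
  · rintro ⟨_, s, hs, h⟩
    exact ⟨hdisj, s, ⟨1, by simpa using hs⟩, h⟩
  · rintro ⟨_, s, ⟨y, hy⟩, h⟩
    refine ⟨?_, s * y, hy, fun a b hab hna => ?_⟩
    · exact Set.disjoint_left.mpr fun x hx => Set.disjoint_left.mp hdisj ⟨1, by simpa using hx⟩
    · have hsa : s * a ∉ nilradical R := by
        intro hn
        apply hna
        have : s * y * a = y * (s * a) := by ring
        rw [this]
        exact (nilradical R).mul_mem_left y hn
      have := h a b hab hsa
      have : s * y * b = y * (s * b) := by rw [mul_comm s y, mul_assoc]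
      rw [this]
      exact I.mul_mem_left y (h a b hab hsa)
end

section
/- Let R be a commutative ring, S a multiplicatively closed subset, and I an S-n-ideal of R. Then the localized ideal S⁻¹I is an n-ideal of the localization S⁻¹R. -/
namespace IsLocalization

variable {R : Type*} [CommSemiring R] {M : Submonoid R}
  {L : Type*} [CommSemiring L] [Algebra R L] [IsLocalization M L]

theorem isNilpotent_mk'_of_isNilpotent_mul {x s : R} (hs : s ∈ M) (h : IsNilpotent (s * x))
    (m : M) : IsNilpotent (mk' L x m) := by
  have hsx : IsNilpotent (algebraMap R L s * algebraMap R L x) := by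
    simpa only [map_mul] using h.map (algebraMap R L)
  rw [(map_units L ⟨s, hs⟩).isNilpotent_unit_mul_of_commute_iff (Commute.all _ _),
    ← mk'_spec L x m] at hsx
  exact ((map_units L m).isNilpotent_mul_unit_of_commute_iff (Commute.all _ _)).1 hsx

end IsLocalization

open IsLocalization in
theorem IsSnIdeal.isNIdeal_map {R : Type*} [CommRing R] {S : Submonoid R} {I : Ideal R}
    (hI : IsSnIdeal (S : Set R) I) (L : Type*) [CommRing L] [Algebra R L] [IsLocalization S L] :
    IsNIdeal (I.map (algebraMap R L)) := by
  obtain ⟨hdisj, s, hs, hsn⟩ := hI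
  refine ⟨(map_algebraMap_ne_top_iff_disjoint S L I).2 hdisj, fun x y hxy hx ↦ ?_⟩
  obtain ⟨⟨a, t⟩, rfl⟩ := mk'_surjective S x
  obtain ⟨⟨b, u⟩, rfl⟩ := mk'_surjective S y
  rw [← mk'_mul, mk'_mem_map_algebraMap_iff S L] at hxy
  obtain ⟨w, hw, hwab⟩ := hxy
  have hsa : s * a ∉ nilradical R := fun h ↦ hx (isNilpotent_mk'_of_isNilpotent_mul hs h t)
  have hswb : s * (w * b) ∈ I := hsn a (w * b) (by rwa [mul_left_comm]) hsa
  rw [mk'_mem_map_algebraMap_iff S L]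
  exact ⟨s * w, S.mul_mem hs hw, by rwa [mul_assoc]⟩

theorem stmt_16 {R : Type*} [CommRing R] (S : Submonoid R) (I : Ideal R)
    (hI : IsSnIdeal (S : Set R) I) :
    IsNIdeal (I.map (algebraMap R (Localization S))) :=
  hI.isNIdeal_map _
end

section
/- Let f : R₁ → R₂ be a surjective ring homomorphism between commutative rings, S a multiplicatively closed subset of R₁, and I an S-n-ideal of R₁ with ker(f) ⊆ I. Then f(I) is an f(S)-n-ideal of R₂. -/
theorem stmt_17 {R₁ R₂ : Type*} [CommRing R₁] [CommRing R₂] (f : R₁ →+* R₂)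
    (hf : Function.Surjective f) (S : Submonoid R₁) (I : Ideal R₁)
    (hI : IsSnIdeal (S : Set R₁) I) (hker : RingHom.ker f ≤ I) :
    IsSnIdeal (f '' (S : Set R₁)) (I.map f) := by
  obtain ⟨hdisj, s, hs, hmain⟩ := hI
  have hcomap : Ideal.comap f (I.map f) = I := by
    rw [Ideal.comap_map_of_surjective f hf, ← RingHom.ker_eq_comap_bot, sup_eq_left.mpr hker]
  have hmem : ∀ x, f x ∈ I.map f → x ∈ I := fun x hx => by
    rw [← hcomap]; exact hx
  constructor
  · rw [Set.disjoint_left]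
    rintro _ ⟨t, ht, rfl⟩ hmemI
    exact Set.disjoint_left.mp hdisj ht (hmem t hmemI)
  · refine ⟨f s, ⟨s, hs, rfl⟩, fun a b hab hna => ?_⟩
    obtain ⟨a', rfl⟩ := hf a
    obtain ⟨b', rfl⟩ := hf b
    have : a' * b' ∈ I := hmem _ (by rw [map_mul]; exact hab)
    have hsa : s * a' ∉ nilradical R₁ := fun h => hna (by
      rw [← map_mul]
      exact mem_nilradical.mpr ((mem_nilradical.mp h).map f))
    rw [← map_mul]
    exact Ideal.mem_map_of_mem f (hmain a' b' this hsa)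
end

section
/- Let R and R' be commutative rings with multiplicatively closed subsets S ⊆ R, S' ⊆ R', and let I be an ideal of R. Then I × R' is an (S × S')-n-ideal of R × R' if and only if I is an S-n-ideal of R and S' ∩ √0_{R'} ≠ ∅. -/
/-!
For `s ∈ S`, `s' ∈ S'` with `s ∉ I`, the element `(s, s')` witnesses the `n`-ideal condition for
`I × R'` exactly when `s` witnesses it for `I` and `s'` is nilpotent: testing on
`(0, 1) * (1, 0) = 0` forces `s'` nilpotent (otherwise `s ∈ I`), testing on `(a, 1) * (b, 1)`
gives the condition for `I`, and conversely a nilpotent `s'` makes `(s, s') * (a, a')` nilpotent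
as soon as `s * a` is. Disjointness from `S × S'` is disjointness of `I` from `S`, as `1 ∈ S'`.
-/

theorem Prod.isNilpotent_iff {M N : Type*} [MonoidWithZero M] [MonoidWithZero N] {x : M × N} :
    IsNilpotent x ↔ IsNilpotent x.1 ∧ IsNilpotent x.2 := by
  constructor
  · rintro ⟨n, hn⟩
    exact ⟨⟨n, congrArg Prod.fst hn⟩, ⟨n, congrArg Prod.snd hn⟩⟩
  · rintro ⟨⟨m, hm⟩, ⟨n, hn⟩⟩
    exact ⟨max m n, Prod.ext (pow_eq_zero_of_le (le_max_left m n) hm)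
      (pow_eq_zero_of_le (le_max_right m n) hn)⟩

theorem mem_nilradical_prod_iff {R R' : Type*} [CommRing R] [CommRing R'] {x : R × R'} :
    x ∈ nilradical (R × R') ↔ x.1 ∈ nilradical R ∧ x.2 ∈ nilradical R' := by
  simp only [mem_nilradical, Prod.isNilpotent_iff]

def IsSnWitness {R : Type*} [CommRing R] (I : Ideal R) (s : R) : Prop :=
  ∀ a b : R, a * b ∈ I → s * a ∉ nilradical R → s * b ∈ I

theorem isSnIdeal_iff {R : Type*} [CommRing R] {S : Set R} {I : Ideal R} :
    IsSnIdeal S I ↔ Disjoint S (I : Set R) ∧ ∃ s ∈ S, IsSnWitness I s :=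
  Iff.rfl

theorem isSnWitness_prod_top_iff {R R' : Type*} [CommRing R] [CommRing R'] {I : Ideal R} {s : R}
    (hs : s ∉ I) (s' : R') :
    IsSnWitness (I.prod (⊤ : Ideal R')) (s, s') ↔ IsSnWitness I s ∧ s' ∈ nilradical R' := by
  constructor
  · intro h
    refine ⟨fun a b hab hsa => ?_, ?_⟩
    · have := h (a, 1) (b, 1) (by simp [Ideal.mem_prod, hab])
        fun hnil => hsa (by simpa using (mem_nilradical_prod_iff.1 hnil).1)
      simpa [Ideal.mem_prod] using this
    · by_contra hs'
      have := h (0, 1) (1, 0) (by simp [Ideal.mem_prod])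
        fun hnil => hs' (by simpa using (mem_nilradical_prod_iff.1 hnil).2)
      exact hs (by simpa [Ideal.mem_prod] using this)
  · rintro ⟨hI, hs'⟩ ⟨a, a'⟩ ⟨b, b'⟩ hab hsa
    refine (Ideal.mem_prod _ _).2
      ⟨hI a b ((Ideal.mem_prod _ _).1 hab).1 fun hsa' => hsa ?_, trivial⟩
    exact mem_nilradical_prod_iff.2
      ⟨hsa', mem_nilradical.2 ((Commute.all s' a').isNilpotent_mul_right (mem_nilradical.1 hs'))⟩

theorem stmt_18 {R R' : Type*} [CommRing R] [CommRing R'] (S : Submonoid R)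
    (S' : Submonoid R') (I : Ideal R) :
    IsSnIdeal ((S : Set R) ×ˢ (S' : Set R')) (I.prod (⊤ : Ideal R')) ↔
      IsSnIdeal (S : Set R) I ∧ ((S' : Set R') ∩ (nilradical R' : Set R')).Nonempty := by
  have hdisj : Disjoint ((S : Set R) ×ˢ (S' : Set R')) (I.prod (⊤ : Ideal R') : Set (R × R')) ↔
      Disjoint (S : Set R) (I : Set R) := by
    rw [Ideal.coe_prod, Submodule.top_coe, Set.disjoint_prod, Set.disjoint_univ,
      or_iff_left (Set.nonempty_of_mem S'.one_mem).ne_empty]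
  rw [isSnIdeal_iff, isSnIdeal_iff, hdisj]
  constructor
  · rintro ⟨hSI, ⟨s, s'⟩, ⟨hs, hs'⟩, hw⟩
    obtain ⟨hwI, hnil⟩ := (isSnWitness_prod_top_iff (hSI.notMem_of_mem_left hs) s').1 hw
    exact ⟨⟨hSI, s, hs, hwI⟩, s', hs', hnil⟩
  · rintro ⟨⟨hSI, s, hs, hwI⟩, s', hs', hnil⟩
    exact ⟨hSI, (s, s'), ⟨hs, hs'⟩,
      (isSnWitness_prod_top_iff (hSI.notMem_of_mem_left hs) s').2 ⟨hwI, hnil⟩⟩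
end

section
/- Let R be a commutative ring, M an R-module, S a multiplicatively closed subset of R, and I an ideal of R disjoint from S. Then I is an S-n-ideal of R if and only if the ideal I(+)M of the idealization R(+)M is an (S(+)M)-n-ideal of R(+)M. -/
open TrivSqZeroExt
theorem nilp {R M : Type*} [CommRing R] [AddCommGroup M] [Module R M]
    [Module Rᵐᵒᵖ M] [IsCentralScalar R M] (x : TrivSqZeroExt R M) :
    IsNilpotent x ↔ IsNilpotent x.fst := by
  constructor
  · rintro ⟨n, hn⟩
    exact ⟨n, by rw [← fst_pow, hn, fst_zero]⟩
  · rintro ⟨n, hn⟩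
    refine ⟨n + 1, TrivSqZeroExt.ext ?_ ?_⟩
    · rw [fst_pow, pow_succ, hn, zero_mul, fst_zero]
    · rw [snd_pow, snd_zero, Nat.pred_succ, hn, zero_smul, smul_zero]

theorem stmt_19 {R M : Type*} [CommRing R] [AddCommGroup M] [Module R M]
    [Module Rᵐᵒᵖ M] [IsCentralScalar R M]
    (S : Submonoid R) (I : Ideal R)
    (hdisj : Disjoint (S : Set R) (I : Set R)) :
    IsSnIdeal (S : Set R) I ↔
      IsSnIdeal {x : TrivSqZeroExt R M | x.fst ∈ S}
        (Ideal.comap (TrivSqZeroExt.fstHom R R M).toRingHom I) := by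
  have hmem : ∀ x : TrivSqZeroExt R M,
      x ∈ Ideal.comap (TrivSqZeroExt.fstHom R R M).toRingHom I ↔ x.fst ∈ I := fun x => Iff.rfl
  constructor
  · rintro ⟨hd, s, hs, h⟩
    refine ⟨?_, inl s, by simpa using hs, ?_⟩
    · rw [Set.disjoint_left]
      intro x hxS hxI
      exact Set.disjoint_left.mp hdisj hxS ((hmem x).mp hxI)
    · intro a b hab hna
      rw [hmem] at hab ⊢
      rw [fst_mul, fst_inl]
      refine h a.fst b.fst (by simpa [fst_mul] using hab) ?_
      intro hnil
      exact hna (by rw [mem_nilradical] at hnil ⊢; rw [nilp, fst_mul, fst_inl]; exact hnil)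
  · rintro ⟨hd, s, hs, h⟩
    refine ⟨hdisj, s.fst, hs, ?_⟩
    intro a b hab hna
    have := h (inl a) (inl b) (by rw [hmem]; simpa using hab) ?_
    · simpa [hmem, fst_mul] using this
    · intro hnil
      exact hna (by rw [mem_nilradical] at hnil ⊢; rw [nilp, fst_mul, fst_inl] at hnil; exact hnil)
end
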